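/- Let n ∈ ℕ, let I ⊆ ℝ be an open interval, and let Q : I → ℂ^{n×n} be pointwise Hermitian positive semidefinite and weakly decreasing. Then there exists a constant invertible matrix V ∈ ℂ^{n×n} such that, for every t ∈ I, writing r(t) = rank Q(t), the matrix Q̃(t) := V* Q(t) V satisfies: Q̃(t)_{ij} = 0 whenever i > r(t) or j > r(t), and the top-left r(t)×r(t) block of Q̃(t) is Hermitian positive definite. Moreover, for every t ∈ I at which a one-sided limit L = lim_{s→t⁻} Q(s) (respectively L = lim_{s→t⁺} Q(s)) exists, V* L V has the same block structure with r(t) replaced by rank L. -/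

import Mathlib

/-!
The matrices `Q t` and the one-sided limits of `Q` at points of `I` are positive semidefinite
(the Loewner cone is closed) and, `Q` being antitone, pairwise comparable in the Loewner order.
Since `0 ≤ A ≤ B` forces `ker B ≤ ker A`, their kernels form a chain of subspaces of `ℂⁿ`, and a
chain of subspaces has a basis `b₀, …, bₙ₋₁` such that every member is spanned by an initial
segment `b₀, …, b_{k-1}`. Taking `V` with columns `bₙ₋₁, …, b₀`, the kernel of each such `M` is
spanned by the last `n - rank M` columns of `V`: so `Vᴴ M V` vanishes outside its leading
`rank M` block, and this block is positive definite because no nonzero combination of the first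
`rank M` columns lies in `ker M`.
-/

open MeasureTheory Matrix Set Filter Topology
open scoped ComplexOrder ENNReal

namespace Paper

/-- Loewner order `M ≤ N`, i.e. `N - M` is positive semidefinite. -/
def LoewnerLE {n : ℕ} (M N : Matrix (Fin n) (Fin n) ℂ) : Prop := (N - M).PosSemidef

/-- Entrywise (Bochner) interval integral of a matrix-valued function. -/
noncomputable def matInt {k l : ℕ} (G : ℝ → Matrix (Fin k) (Fin l) ℂ) (r s : ℝ) :
    Matrix (Fin k) (Fin l) ℂ :=
  Matrix.of fun i j => ∫ t in r..s, G t i j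

/-- `Q` is absolutely upper semicontinuous on `[a,b]`: there is a Bochner-integrable,
pointwise Hermitian `G` with `Q s - Q r ≤ ∫_r^s G` in the Loewner order. -/
def IsAUCOn {n : ℕ} (Q : ℝ → Matrix (Fin n) (Fin n) ℂ) (a b : ℝ) : Prop :=
  ∃ G : ℝ → Matrix (Fin n) (Fin n) ℂ,
    (∀ t, (G t).IsHermitian) ∧
    (∀ i j, IntegrableOn (fun t => G t i j) (Icc a b)) ∧
    ∀ r s : ℝ, a ≤ r → r ≤ s → s ≤ b → LoewnerLE (Q s - Q r) (matInt G r s)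

/-- A matrix-valued function is locally `L^p` on `I` (entrywise, on compact subintervals). -/
def MemLocLp {k l : ℕ} (p : ℝ≥0∞) (I : Set ℝ) (F : ℝ → Matrix (Fin k) (Fin l) ℂ) : Prop :=
  ∀ a b : ℝ, a ∈ I → b ∈ I → ∀ i j, MemLp (fun t => F t i j) p (volume.restrict (Icc a b))

/-- A vector-valued function is locally `L^p` on `I`. -/
def VecMemLocLp {k : ℕ} (p : ℝ≥0∞) (I : Set ℝ) (f : ℝ → Fin k → ℂ) : Prop :=
  ∀ a b : ℝ, a ∈ I → b ∈ I → ∀ i, MemLp (fun t => f t i) p (volume.restrict (Icc a b))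

/-- `x` is locally absolutely continuous on `I` with (a.e.) derivative `x'`. -/
def VecLocAC {k : ℕ} (I : Set ℝ) (x x' : ℝ → Fin k → ℂ) : Prop :=
  (∀ a b : ℝ, a ∈ I → b ∈ I → ∀ i, IntegrableOn (fun t => x' t i) (Icc a b)) ∧
  ∀ s t : ℝ, s ∈ I → t ∈ I → ∀ i, x t i = x s i + ∫ τ in s..t, x' τ i

/-- A matrix function is locally absolutely continuous on `I` with (a.e.) derivative `X'`. -/
def MatLocAC {k l : ℕ} (I : Set ℝ) (X X' : ℝ → Matrix (Fin k) (Fin l) ℂ) : Prop :=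
  (∀ a b : ℝ, a ∈ I → b ∈ I → ∀ i j, IntegrableOn (fun t => X' t i j) (Icc a b)) ∧
  ∀ s t : ℝ, s ∈ I → t ∈ I → ∀ i j, X t i j = X s i j + ∫ τ in s..t, X' τ i j

/-- The coefficients of an LTV system lie in the appropriate local Lebesgue spaces. -/
def IsLTV {n m : ℕ} (I : Set ℝ)
    (A : ℝ → Matrix (Fin n) (Fin n) ℂ) (B : ℝ → Matrix (Fin n) (Fin m) ℂ)
    (C : ℝ → Matrix (Fin m) (Fin n) ℂ) (D : ℝ → Matrix (Fin m) (Fin m) ℂ) : Prop :=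
  MemLocLp 1 I A ∧ MemLocLp 2 I B ∧ MemLocLp 2 I C ∧ MemLocLp ⊤ I D

/-- `(x, u, y)` is a state-input-output solution of the LTV system on `I`. -/
def IsSIOSol {n m : ℕ} (I : Set ℝ)
    (A : ℝ → Matrix (Fin n) (Fin n) ℂ) (B : ℝ → Matrix (Fin n) (Fin m) ℂ)
    (C : ℝ → Matrix (Fin m) (Fin n) ℂ) (D : ℝ → Matrix (Fin m) (Fin m) ℂ)
    (x : ℝ → Fin n → ℂ) (u y : ℝ → Fin m → ℂ) : Prop :=
  VecMemLocLp 2 I u ∧ VecMemLocLp 2 I y ∧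
  (∃ x', VecLocAC I x x' ∧ ∀ᵐ t ∂volume, t ∈ I → x' t = A t *ᵥ x t + B t *ᵥ u t) ∧
  ∀ᵐ t ∂volume, t ∈ I → y t = C t *ᵥ x t + D t *ᵥ u t

/-- The supplied energy `∫_{t0}^{t1} Re (y(t)^* u(t)) dt`. -/
noncomputable def supply {k : ℕ} (u y : ℝ → Fin k → ℂ) (t0 t1 : ℝ) : ℝ :=
  ∫ t in t0..t1, (star (y t) ⬝ᵥ u t).re

/-- `V` is a storage function for the LTV system on `I`. -/
def IsStorage {n m : ℕ} (I : Set ℝ)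
    (A : ℝ → Matrix (Fin n) (Fin n) ℂ) (B : ℝ → Matrix (Fin n) (Fin m) ℂ)
    (C : ℝ → Matrix (Fin m) (Fin n) ℂ) (D : ℝ → Matrix (Fin m) (Fin m) ℂ)
    (V : ℝ → (Fin n → ℂ) → ℝ) : Prop :=
  (∀ t ∈ I, ∀ x, 0 ≤ V t x) ∧ (∀ t ∈ I, V t 0 = 0) ∧
  ∀ x u y, IsSIOSol I A B C D x u y → ∀ t0 t1 : ℝ, t0 ∈ I → t1 ∈ I → t0 ≤ t1 →
    V t1 (x t1) - V t0 (x t0) ≤ supply u y t0 t1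

/-- The quadratic storage function candidate `V_Q(t, x) = ½ x^* Q(t) x`. -/
noncomputable def quadStorage {k : ℕ} (Q : ℝ → Matrix (Fin k) (Fin k) ℂ) :
    ℝ → (Fin k → ℂ) → ℝ :=
  fun t x => (1 / 2 : ℝ) * (star x ⬝ᵥ (Q t *ᵥ x)).re

/-- `X` is a fundamental solution matrix for `A` anchored at `t0`. -/
def IsFundamental {n : ℕ} (I : Set ℝ) (A : ℝ → Matrix (Fin n) (Fin n) ℂ) (t0 : ℝ)
    (X : ℝ → Matrix (Fin n) (Fin n) ℂ) : Prop :=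
  t0 ∈ I ∧ X t0 = 1 ∧ (∀ t ∈ I, IsUnit (X t)) ∧
  ∃ X', MatLocAC I X X' ∧ ∀ᵐ t ∂volume, t ∈ I → X' t = A t * X t

/-- The supply set whose supremum is the available storage `V_a(t0, x0)`. -/
def supplySet {n m : ℕ} (I : Set ℝ)
    (A : ℝ → Matrix (Fin n) (Fin n) ℂ) (B : ℝ → Matrix (Fin n) (Fin m) ℂ)
    (C : ℝ → Matrix (Fin m) (Fin n) ℂ) (D : ℝ → Matrix (Fin m) (Fin m) ℂ)
    (t0 : ℝ) (x0 : Fin n → ℂ) : Set ℝ :=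
  { c | ∃ t1 x u y, t1 ∈ I ∧ t0 ≤ t1 ∧ IsSIOSol I A B C D x u y ∧ x t0 = x0 ∧
      c = -(supply u y t0 t1) }

/-- Null space decomposition structure: `M i j = 0` whenever `i` or `j` (0-based) is `≥ r`,
and the top-left `r × r` block of `M` is Hermitian positive definite. -/
def NSDStruct {k : ℕ} (M : Matrix (Fin k) (Fin k) ℂ) (r : ℕ) : Prop :=
  (∀ i j : Fin k, (r ≤ (i : ℕ) ∨ r ≤ (j : ℕ)) → M i j = 0) ∧
  ∀ h : r ≤ k, (M.submatrix (Fin.castLE h) (Fin.castLE h)).PosDef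

end Paper

open Module Submodule
open scoped MatrixOrder

section ChainBasis

variable {K V : Type*} [DivisionRing K] [AddCommGroup V] [Module K V] [FiniteDimensional K V]

theorem IsChain.exists_least_of_lt_finrank {C : Set (Submodule K V)} (hC : IsChain (· ≤ ·) C)
    {d : ℕ} (hd : d < finrank K V) :
    ∃ U : Submodule K V, (U = ⊤ ∨ U ∈ C) ∧ d < finrank K U ∧
      ∀ W ∈ C, d < finrank K W → U ≤ W := by
  obtain ⟨U, ⟨hUC, hUd⟩, hUmin⟩ := wellFounded_lt.has_min
    {U : Submodule K V | (U = ⊤ ∨ U ∈ C) ∧ d < finrank K U} ⟨⊤, .inl rfl, by rwa [finrank_top]⟩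
  refine ⟨U, hUC, hUd, fun W hW hWd => ?_⟩
  rcases (hC.insert fun W _ _ => .inr le_top).total (mem_insert_of_mem _ hW) hUC with hWU | hUW
  · exact (eq_of_le_of_not_lt hWU (hUmin W ⟨.inr hW, hWd⟩)).ge
  · exact hUW

theorem IsChain.exists_linearIndependent_forall_mem {C : Set (Submodule K V)}
    (hC : IsChain (· ≤ ·) C) :
    ∀ d ≤ finrank K V, ∃ b : Fin d → V, LinearIndependent K b ∧
      ∀ W ∈ C, ∀ i : Fin d, (i : ℕ) < finrank K W → b i ∈ W
  | 0, _ => ⟨Fin.elim0, linearIndependent_empty_type, fun _ _ i => i.elim0⟩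
  | d + 1, hd => by
    obtain ⟨b, hb, hbC⟩ := hC.exists_linearIndependent_forall_mem d (by omega)
    obtain ⟨U, hUC, hUd, hUmin⟩ := hC.exists_least_of_lt_finrank (d := d) (by omega)
    have hbU : span K (range b) ≤ U := by
      rcases hUC with rfl | hUC
      · exact le_top
      · exact span_le.2 <| range_subset_iff.2 fun i => hbC U hUC i (by omega)
    have hlt : span K (range b) < U := lt_of_le_of_ne hbU fun h => by
      rw [← h, finrank_span_eq_card hb, Fintype.card_fin] at hUd
      exact lt_irrefl _ hUd
    obtain ⟨v, hvU, hvb⟩ := SetLike.exists_of_lt hlt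
    refine ⟨Fin.snoc b v, linearIndependent_finSnoc.2 ⟨hb, hvb⟩, fun W hW i hi => ?_⟩
    induction i using Fin.lastCases with
    | last => simpa using hUmin W hW (by simpa using hi) hvU
    | cast j => simpa using hbC W hW j (by simpa using hi)

theorem IsChain.exists_basis_span_eq {C : Set (Submodule K V)} (hC : IsChain (· ≤ ·) C)
    {n : ℕ} (hn : finrank K V = n) :
    ∃ b : Basis (Fin n) K V, ∀ W ∈ C, W = span K (b '' {i | (i : ℕ) < finrank K W}) := by
  subst hn
  obtain ⟨b, hb, hbC⟩ := hC.exists_linearIndependent_forall_mem _ le_rfl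
  refine ⟨basisOfLinearIndependentOfCardEqFinrank' b hb (Fintype.card_fin _), fun W hW => ?_⟩
  have hWn : finrank K W ≤ finrank K V := Submodule.finrank_le W
  rw [coe_basisOfLinearIndependentOfCardEqFinrank', ← Fin.range_castLE hWn, ← range_comp]
  refine (eq_of_le_of_finrank_eq (span_le.2 ?_) ?_).symm
  · exact range_subset_iff.2 fun i => hbC W hW _ (by simp)
  · rw [finrank_span_eq_card (hb.comp _ (Fin.castLE_injective hWn)), Fintype.card_fin]

end ChainBasis

namespace Matrix

variable {𝕜 m n : Type*} [RCLike 𝕜] [Fintype n]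

theorem isClosed_setOf_posSemidef : IsClosed {A : Matrix n n 𝕜 | A.PosSemidef} := by
  simp_rw [posSemidef_iff_dotProduct_mulVec, ofPred_and, ofPred_forall]
  refine .inter (isClosed_eq continuous_id.matrix_conjTranspose continuous_id)
    (isClosed_iInter fun x => isClosed_le continuous_const ?_)
  exact continuous_const.dotProduct (continuous_id.matrix_mulVec continuous_const)

instance : OrderClosedTopology (Matrix n n 𝕜) where
  isClosed_le' := isClosed_setOf_posSemidef.preimage (continuous_snd.sub continuous_fst)

theorem ker_mulVecLin_le_of_le {A B : Matrix n n 𝕜} (hA : 0 ≤ A) (hAB : A ≤ B) :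
    LinearMap.ker B.mulVecLin ≤ LinearMap.ker A.mulVecLin := by
  intro x hx
  rw [LinearMap.mem_ker, mulVecLin_apply] at hx ⊢
  have hBA := (le_iff.1 hAB).dotProduct_mulVec_nonneg x
  rw [sub_mulVec, dotProduct_sub, hx, dotProduct_zero, zero_sub, neg_nonneg] at hBA
  exact (hA.posSemidef.dotProduct_mulVec_zero_iff x).1
    (le_antisymm hBA (hA.posSemidef.dotProduct_mulVec_nonneg x))

theorem PosSemidef.posDef_conjTranspose_mul_mul [Fintype m] {A : Matrix n n 𝕜}
    (hA : A.PosSemidef) {B : Matrix n m 𝕜} (hB : ∀ x, A *ᵥ (B *ᵥ x) = 0 → x = 0) :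
    (Bᴴ * A * B).PosDef := by
  refine .of_dotProduct_mulVec_pos (isHermitian_conjTranspose_mul_mul _ hA.1) fun x hx => ?_
  have hquad : star x ⬝ᵥ (Bᴴ * A * B) *ᵥ x = star (B *ᵥ x) ⬝ᵥ A *ᵥ (B *ᵥ x) := by
    simp only [star_mulVec, dotProduct_mulVec, vecMul_vecMul, mulVec_mulVec, Matrix.mul_assoc]
  rw [hquad]
  exact (hA.dotProduct_mulVec_nonneg _).lt_of_ne'
    fun h => hx (hB x ((hA.dotProduct_mulVec_zero_iff _).1 h))

end Matrix

section SideLimits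

/-- The limits of `f` along `pure t`, `𝓝[<] t` and `𝓝[>] t` are `f t` and its one-sided limits
at `t`. -/
def sideNhds (t : ℝ) : Set (Filter ℝ) := {𝓝[<] t, pure t, 𝓝[>] t}

theorem le_nhds_of_mem_sideNhds {t : ℝ} {l : Filter ℝ} (hl : l ∈ sideNhds t) : l ≤ 𝓝 t := by
  rcases hl with rfl | rfl | rfl
  exacts [nhdsWithin_le_nhds, pure_le_nhds t, nhdsWithin_le_nhds]

theorem neBot_of_mem_sideNhds {t : ℝ} {l : Filter ℝ} (hl : l ∈ sideNhds t) : l.NeBot := by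
  rcases hl with rfl | rfl | rfl <;> infer_instance

theorem eventually_mem_of_mem_sideNhds {I : Set ℝ} (hI : IsOpen I) {t : ℝ} (ht : t ∈ I)
    {l : Filter ℝ} (hl : l ∈ sideNhds t) : ∀ᶠ x in l, x ∈ I :=
  le_nhds_of_mem_sideNhds hl (hI.mem_nhds ht)

theorem eventually_eventually_le_of_le {β : Type*} [Preorder β] {l₁ l₂ : Filter β} {m : β}
    (h₁ : ∀ᶠ x in l₁, x ≤ m) (h₂ : ∀ᶠ y in l₂, m ≤ y) : ∀ᶠ x in l₁, ∀ᶠ y in l₂, x ≤ y :=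
  h₁.mono fun _ hx => h₂.mono fun _ hy => hx.trans hy

theorem sideNhds_total {t₁ t₂ : ℝ} {l₁ l₂ : Filter ℝ} (hl₁ : l₁ ∈ sideNhds t₁)
    (hl₂ : l₂ ∈ sideNhds t₂) :
    l₁ = l₂ ∨ (∀ᶠ x in l₁, ∀ᶠ y in l₂, x ≤ y) ∨ (∀ᶠ y in l₂, ∀ᶠ x in l₁, y ≤ x) := by
  rcases lt_trichotomy t₁ t₂ with h | rfl | h
  · obtain ⟨m, hm₁, hm₂⟩ := exists_between h
    exact .inr <| .inl <| eventually_eventually_le_of_le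
      (le_nhds_of_mem_sideNhds hl₁ (Iic_mem_nhds hm₁))
      (le_nhds_of_mem_sideNhds hl₂ (Ici_mem_nhds hm₂))
  · -- at a common point, `𝓝[<] t` lies to the left of `pure t`, which lies to the left of `𝓝[>] t`
    have hlt : ∀ᶠ x in 𝓝[<] t₁, x ≤ t₁ := eventually_nhdsWithin_of_forall fun _ hx => hx.le
    have hgt : ∀ᶠ x in 𝓝[>] t₁, t₁ ≤ x := eventually_nhdsWithin_of_forall fun _ hx => hx.le
    have hle : ∀ᶠ x in pure t₁, x ≤ t₁ := eventually_pure.2 le_rfl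
    have hge : ∀ᶠ x in pure t₁, t₁ ≤ x := eventually_pure.2 le_rfl
    rcases hl₁ with rfl | rfl | rfl <;> rcases hl₂ with rfl | rfl | rfl
    all_goals first
      | exact .inl rfl
      | exact .inr (.inl (eventually_eventually_le_of_le ‹_› ‹_›))
      | exact .inr (.inr (eventually_eventually_le_of_le ‹_› ‹_›))
  · obtain ⟨m, hm₂, hm₁⟩ := exists_between h
    exact .inr <| .inr <| eventually_eventually_le_of_le
      (le_nhds_of_mem_sideNhds hl₂ (Iic_mem_nhds hm₂))
      (le_nhds_of_mem_sideNhds hl₁ (Ici_mem_nhds hm₁))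

variable {α : Type*} [TopologicalSpace α]

def sideLimits (f : ℝ → α) (I : Set ℝ) : Set α :=
  {a | ∃ t ∈ I, ∃ l ∈ sideNhds t, Tendsto f l (𝓝 a)}

variable [PartialOrder α] [OrderClosedTopology α]

theorem le_of_mem_sideLimits {f : ℝ → α} {I : Set ℝ} (hI : IsOpen I) {b : α}
    (hb : ∀ t ∈ I, b ≤ f t) {a : α} (ha : a ∈ sideLimits f I) : b ≤ a := by
  obtain ⟨t, ht, l, hl, hfa⟩ := ha
  have := neBot_of_mem_sideNhds hl
  exact ge_of_tendsto hfa ((eventually_mem_of_mem_sideNhds hI ht hl).mono hb)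

theorem AntitoneOn.le_of_tendsto_sideNhds {f : ℝ → α} {I : Set ℝ} (hf : AntitoneOn f I)
    (hI : IsOpen I) {t₁ t₂ : ℝ} (ht₁ : t₁ ∈ I) (ht₂ : t₂ ∈ I) {l₁ l₂ : Filter ℝ}
    (hl₁ : l₁ ∈ sideNhds t₁) (hl₂ : l₂ ∈ sideNhds t₂) {a₁ a₂ : α} (h₁ : Tendsto f l₁ (𝓝 a₁))
    (h₂ : Tendsto f l₂ (𝓝 a₂)) (hle : ∀ᶠ x in l₁, ∀ᶠ y in l₂, x ≤ y) : a₂ ≤ a₁ := by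
  have := neBot_of_mem_sideNhds hl₁
  have := neBot_of_mem_sideNhds hl₂
  refine ge_of_tendsto h₁ ?_
  filter_upwards [hle, eventually_mem_of_mem_sideNhds hI ht₁ hl₁] with x hx hxI
  refine le_of_tendsto h₂ ?_
  filter_upwards [hx, eventually_mem_of_mem_sideNhds hI ht₂ hl₂] with y hxy hyI
  exact hf hxI hyI hxy

theorem AntitoneOn.isChain_sideLimits {f : ℝ → α} {I : Set ℝ} (hf : AntitoneOn f I)
    (hI : IsOpen I) : IsChain (· ≤ ·) (sideLimits f I) := by
  rintro a₁ ⟨t₁, ht₁, l₁, hl₁, h₁⟩ a₂ ⟨t₂, ht₂, l₂, hl₂, h₂⟩ hne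
  rcases sideNhds_total hl₁ hl₂ with rfl | hle | hle
  · have := neBot_of_mem_sideNhds hl₁
    exact absurd (tendsto_nhds_unique h₁ h₂) hne
  · exact .inr (hf.le_of_tendsto_sideNhds hI ht₁ ht₂ hl₁ hl₂ h₁ h₂ hle)
  · exact .inl (hf.le_of_tendsto_sideNhds hI ht₂ ht₁ hl₂ hl₁ h₂ h₁ hle)

end SideLimits

namespace Paper

variable {n : ℕ}

theorem nsdStruct_of_ker_eq_span {M V : Matrix (Fin n) (Fin n) ℂ} (hM : M.PosSemidef)
    (hV : LinearIndependent ℂ V.col) {r : ℕ}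
    (hker : LinearMap.ker M.mulVecLin = span ℂ (V.col '' {j | r ≤ (j : ℕ)})) :
    NSDStruct (Vᴴ * M * V) r := by
  have hcol : ∀ j : Fin n, r ≤ (j : ℕ) → M *ᵥ V.col j = 0 := fun j hj => by
    simpa using hker.ge (subset_span ⟨j, hj, rfl⟩)
  have hentry : ∀ i j, (Vᴴ * M * V) i j = star (V.col i) ⬝ᵥ M *ᵥ V.col j := fun i j => by
    rw [Matrix.mul_assoc]
    simp [mul_apply, dotProduct, mulVec]
  refine ⟨fun i j hij => ?_, fun h => ?_⟩
  · rcases hij with hi | hj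
    · rw [← (isHermitian_conjTranspose_mul_mul V hM.1).apply i j, hentry, hcol i hi,
        dotProduct_zero, star_zero]
    · rw [hentry, hcol j hj, dotProduct_zero]
  set W := V.submatrix id (Fin.castLE h)
  have hsub : (Vᴴ * M * V).submatrix (Fin.castLE h) (Fin.castLE h) = Wᴴ * M * W := by
    simp [W, submatrix_mul _ _ _ id _ Function.bijective_id, conjTranspose_submatrix]
  rw [hsub]
  refine hM.posDef_conjTranspose_mul_mul fun x hx => ?_
  have hWx : W *ᵥ x = ∑ i, x i • V.col (Fin.castLE h i) := by
    ext k
    simp [W, mulVec, dotProduct, mul_comm]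
  have hlow : W *ᵥ x ∈ span ℂ (V.col '' {j | (j : ℕ) < r}) := by
    rw [hWx]
    exact sum_mem fun i _ => smul_mem _ _ (subset_span ⟨_, by simp, rfl⟩)
  have hhigh : W *ᵥ x ∈ span ℂ (V.col '' {j | r ≤ (j : ℕ)}) := hker ▸ hx
  have hdisj : Disjoint {j : Fin n | (j : ℕ) < r} {j | r ≤ (j : ℕ)} :=
    Set.disjoint_left.2 fun j (hj : (j : ℕ) < r) (hj' : r ≤ (j : ℕ)) => by omega
  have hzero : W *ᵥ x = 0 := (hV.disjoint_span_image hdisj).le_bot ⟨hlow, hhigh⟩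
  rw [hWx] at hzero
  exact funext (Fintype.linearIndependent_iff.1 (hV.comp _ (Fin.castLE_injective h)) x hzero)

theorem exists_isUnit_forall_nsdStruct {S : Set (Matrix (Fin n) (Fin n) ℂ)}
    (hS : ∀ M ∈ S, 0 ≤ M) (hchain : IsChain (· ≤ ·) S) :
    ∃ V : Matrix (Fin n) (Fin n) ℂ, IsUnit V ∧ ∀ M ∈ S, NSDStruct (Vᴴ * M * V) M.rank := by
  have hker : IsChain (· ≤ ·)
      ((fun M : Matrix (Fin n) (Fin n) ℂ => LinearMap.ker M.mulVecLin) '' S) := by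
    rintro _ ⟨M, hM, rfl⟩ _ ⟨N, hN, rfl⟩ -
    rcases hchain.total hM hN with h | h
    · exact .inr (ker_mulVecLin_le_of_le (hS M hM) h)
    · exact .inl (ker_mulVecLin_le_of_le (hS N hN) h)
  obtain ⟨b, hb⟩ := hker.exists_basis_span_eq (finrank_fin_fun ℂ)
  set V : Matrix (Fin n) (Fin n) ℂ := (Matrix.of fun j => b (Fin.rev j))ᵀ
  have hV : LinearIndependent ℂ V.col := b.linearIndependent.comp _ Fin.rev_injective
  refine ⟨V, linearIndependent_cols_iff_isUnit.1 hV,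
    fun M hM => nsdStruct_of_ker_eq_span (hS M hM).posSemidef hV ?_⟩
  have hrank : M.rank + finrank ℂ (LinearMap.ker M.mulVecLin) = n := by
    rw [Matrix.rank, LinearMap.finrank_range_add_finrank_ker, finrank_fin_fun]
  refine (hb _ ⟨M, hM, rfl⟩).trans (congrArg _ ?_)
  ext x
  simp only [V, Set.mem_image, Set.mem_ofPred_eq, of_col]
  constructor
  · rintro ⟨i, hi, rfl⟩
    exact ⟨i.rev, by simp; omega, by simp⟩
  · rintro ⟨j, hj, rfl⟩
    exact ⟨j.rev, by simp; omega, rfl⟩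

theorem statement14_general {n : ℕ} (I : Set ℝ) (hIopen : IsOpen I)
    (Q : ℝ → Matrix (Fin n) (Fin n) ℂ) (hQpsd : ∀ t ∈ I, (Q t).PosSemidef)
    (hdec : ∀ t0 t1 : ℝ, t0 ∈ I → t1 ∈ I → t0 ≤ t1 → LoewnerLE (Q t1) (Q t0)) :
    ∃ V : Matrix (Fin n) (Fin n) ℂ, IsUnit V ∧
      (∀ t ∈ I, NSDStruct (Vᴴ * Q t * V) (Q t).rank) ∧
      ∀ t ∈ I, ∀ L : Matrix (Fin n) (Fin n) ℂ,
        ((∀ i j, Tendsto (fun s => Q s i j) (𝓝[<] t) (𝓝 (L i j))) ∨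
         (∀ i j, Tendsto (fun s => Q s i j) (𝓝[>] t) (𝓝 (L i j)))) →
        NSDStruct (Vᴴ * L * V) L.rank := by
  have hQ : AntitoneOn Q I := fun s hs t ht hst => hdec s t hs ht hst
  obtain ⟨V, hV, hNSD⟩ := exists_isUnit_forall_nsdStruct
    (fun M hM => le_of_mem_sideLimits hIopen (fun t ht => (hQpsd t ht).nonneg) hM)
    (hQ.isChain_sideLimits hIopen)
  refine ⟨V, hV, fun t ht => hNSD _ ⟨t, ht, pure t, by simp [sideNhds], tendsto_pure_nhds Q t⟩,
    fun t ht L hL => hNSD L ⟨t, ht, ?_⟩⟩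
  have hlim : ∀ l : Filter ℝ, (∀ i j, Tendsto (fun s => Q s i j) l (𝓝 (L i j))) →
      Tendsto Q l (𝓝 L) := fun l h => tendsto_pi_nhds.2 fun i => tendsto_pi_nhds.2 (h i)
  rcases hL with hL | hL
  exacts [⟨_, by simp [sideNhds], hlim _ hL⟩, ⟨_, by simp [sideNhds], hlim _ hL⟩]

/-- null space decomposition of a weakly decreasing pointwise Hermitian PSD
matrix function by a single constant invertible congruence, also valid for all existing
one-sided limits. -/
theorem statement14 {n : ℕ} (I : Set ℝ) (hIopen : IsOpen I) (hIconn : I.OrdConnected)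
    (Q : ℝ → Matrix (Fin n) (Fin n) ℂ) (hQpsd : ∀ t ∈ I, (Q t).PosSemidef)
    (hdec : ∀ t0 t1 : ℝ, t0 ∈ I → t1 ∈ I → t0 ≤ t1 → LoewnerLE (Q t1) (Q t0)) :
    ∃ V : Matrix (Fin n) (Fin n) ℂ, IsUnit V ∧
      (∀ t ∈ I, NSDStruct (Vᴴ * Q t * V) (Q t).rank) ∧
      ∀ t ∈ I, ∀ L : Matrix (Fin n) (Fin n) ℂ,
        ((∀ i j, Tendsto (fun s => Q s i j) (𝓝[<] t) (𝓝 (L i j))) ∨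
         (∀ i j, Tendsto (fun s => Q s i j) (𝓝[>] t) (𝓝 (L i j)))) →
        NSDStruct (Vᴴ * L * V) L.rank :=
  statement14_general I hIopen Q hQpsd hdec

end Paper
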